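/- arXiv:1511.05002 — 5 statements merged into one kernel-verified Lean document; each statement's English description precedes it below -/
import Mathlib

section
/- The generating function for the number p(n, m̄, m̲) of N=2 superpartitions in sector (n | m̄, m̲) is Σ p(n,m̄,m̲) q^n ξ^{m̄} γ^{m̲} = Π_{n≥0} (1+ξq^n)(1+γq^n) / ((1-ξγq^n)(1-q^{n+1})). -/
/-- An `N=2` superpartition, given by its four constituent partitions:
`lam0` collects the unmarked (plain) parts (positive, with multiplicity),
`lamBar` the overlined parts (distinct, zero allowed),
`lamUnd` the underlined parts (distinct, zero allowed),
`lamBil` the bilined parts (with multiplicity, zeros allowed). -/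
structure N2SuperPartition where
  lam0 : Multiset ℕ
  lam0_pos : (0 : ℕ) ∉ lam0
  lamBar : Finset ℕ
  lamUnd : Finset ℕ
  lamBil : Multiset ℕ

namespace N2SuperPartition

/-- Total bosonic degree `|Λ|`. -/
def degree (Λ : N2SuperPartition) : ℕ :=
  Λ.lam0.sum + Λ.lamBar.sum id + Λ.lamUnd.sum id + Λ.lamBil.sum

/-- Fermionic degree `m̄ = ℓ(λ̄) + ℓ(λ̿)`. -/
def mBar (Λ : N2SuperPartition) : ℕ := Λ.lamBar.card + Multiset.card Λ.lamBil

/-- Fermionic degree `m̲ = ℓ(λ̲) + ℓ(λ̿)`. -/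
def mUnd (Λ : N2SuperPartition) : ℕ := Λ.lamUnd.card + Multiset.card Λ.lamBil

end N2SuperPartition

/-- The number `p(n, m̄, m̲)` of `N=2` superpartitions in the sector `(n | m̄, m̲)`. -/
noncomputable def superPartitionCount (n mb mu : ℕ) : ℕ :=
  Set.ncard {Λ : N2SuperPartition | Λ.degree = n ∧ Λ.mBar = mb ∧ Λ.mUnd = mu}

/-- The generating function `P = Σ p(n,m̄,m̲) qⁿ ξ^m̄ γ^m̲`, as a formal power series in the
three variables `q = X 0`, `ξ = X 1`, `γ = X 2`. -/
noncomputable def superPartitionGF : MvPowerSeries (Fin 3) ℤ :=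
  fun d => (superPartitionCount (d 0) (d 1) (d 2) : ℤ)

open Finset

/-!
A superpartition whose parts are all at most `n` amounts to an independent choice, for each
`k ≤ n`, of whether `k` is overlined, whether it is underlined, how often it is bilined and how
often `k + 1` occurs unmarked. Counted by weight, the choices at `k` have generating function
`(1 + ξqᵏ)(1 + γqᵏ) / ((1 - ξγqᵏ)(1 - q^{k+1}))`, and independent choices multiply. A
superpartition of degree at most `n` has all its parts at most `n`, so the product over `k ≤ n`
agrees with the full generating function up to `q^{n+1}`.
-/

open MvPowerSeries

section CountSeries

variable {σ α β : Type*}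

/-- `Nat.card` of an infinite type is `0`, so this is only multiplicative when the fibers of `w`
are finite. -/
noncomputable def countSeries (w : α → σ →₀ ℕ) : MvPowerSeries σ ℤ :=
  fun d => Nat.card {a // w a = d}

def FiniteFibers (w : α → σ →₀ ℕ) : Prop :=
  ∀ d, Finite {a // w a = d}

lemma coeff_countSeries (w : α → σ →₀ ℕ) (d : σ →₀ ℕ) :
    coeff d (countSeries w) = Nat.card {a // w a = d} := rfl

lemma countSeries_comp_equiv (e : α ≃ β) (w : β → σ →₀ ℕ) :
    countSeries (w ∘ e) = countSeries w := by
  ext d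
  simp only [coeff_countSeries]
  exact congrArg _ (Nat.card_congr (e.subtypeEquiv fun _ => Iff.rfl))

def fiberAddEquiv [DecidableEq σ] (w₁ : α → σ →₀ ℕ) (w₂ : β → σ →₀ ℕ) (d : σ →₀ ℕ) :
    {p : α × β // w₁ p.1 + w₂ p.2 = d} ≃
      Σ x : antidiagonal d, {a // w₁ a = x.1.1} × {b // w₂ b = x.1.2} where
  toFun p := ⟨⟨(w₁ p.1.1, w₂ p.1.2), mem_antidiagonal.mpr p.2⟩, ⟨p.1.1, rfl⟩, ⟨p.1.2, rfl⟩⟩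
  invFun x := ⟨(x.2.1, x.2.2), by rw [x.2.1.2, x.2.2.2]; exact mem_antidiagonal.mp x.1.2⟩
  left_inv p := rfl
  right_inv := by
    rintro ⟨⟨⟨x₁, x₂⟩, hx⟩, ⟨a, ha⟩, ⟨b, hb⟩⟩
    dsimp only at ha hb
    subst ha hb
    rfl

namespace FiniteFibers

lemma of_finite [Finite α] (w : α → σ →₀ ℕ) : FiniteFibers w :=
  fun _ => inferInstance

lemma add {w₁ : α → σ →₀ ℕ} {w₂ : β → σ →₀ ℕ} (h₁ : FiniteFibers w₁) (h₂ : FiniteFibers w₂) :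
    FiniteFibers fun p : α × β => w₁ p.1 + w₂ p.2 := by
  classical
  intro d
  have : ∀ x, Finite {a // w₁ a = x} := h₁
  have : ∀ x, Finite {b // w₂ b = x} := h₂
  exact Finite.of_equiv _ (fiberAddEquiv w₁ w₂ d).symm

lemma sum {N : ℕ} {w : Fin N → α → σ →₀ ℕ} (hw : ∀ k, FiniteFibers (w k)) :
    FiniteFibers fun f : Fin N → α => ∑ k, w k (f k) := by
  induction N with
  | zero => exact fun _ => Finite.of_subsingleton
  | succ N ih =>
    intro d
    have := ((hw 0).add (ih fun k => hw k.succ)) d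
    refine Finite.of_equiv {p : α × (Fin N → α) // w 0 p.1 + ∑ k, w k.succ (p.2 k) = d}
      ((Fin.consEquiv fun _ => α).subtypeEquiv fun p => ?_)
    simp [Fin.sum_univ_succ]

end FiniteFibers

lemma countSeries_mul {w₁ : α → σ →₀ ℕ} {w₂ : β → σ →₀ ℕ} (h₁ : FiniteFibers w₁)
    (h₂ : FiniteFibers w₂) :
    countSeries w₁ * countSeries w₂ = countSeries fun p : α × β => w₁ p.1 + w₂ p.2 := by
  classical
  ext d
  have : ∀ x, Finite {a // w₁ a = x} := h₁
  have : ∀ x, Finite {b // w₂ b = x} := h₂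
  rw [coeff_mul, coeff_countSeries, Nat.card_congr (fiberAddEquiv w₁ w₂ d), Nat.card_sigma,
    ← sum_coe_sort (antidiagonal d)]
  simp [coeff_countSeries, Nat.card_prod]

lemma prod_countSeries {N : ℕ} {w : Fin N → α → σ →₀ ℕ} (hw : ∀ k, FiniteFibers (w k)) :
    ∏ k, countSeries (w k) = countSeries fun f : Fin N → α => ∑ k, w k (f k) := by
  induction N with
  | zero =>
    classical
    ext d
    rw [Fin.prod_univ_zero, coeff_one, coeff_countSeries]
    split_ifs with h
    · subst h; simp
    · simp [Ne.symm h]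
  | succ N ih =>
    rw [Fin.prod_univ_succ, ih fun k => hw k.succ,
      countSeries_mul (hw 0) (FiniteFibers.sum fun k => hw k.succ),
      ← countSeries_comp_equiv (Fin.consEquiv fun _ => α)]
    congr 1
    funext p
    simp [Fin.sum_univ_succ]

lemma countSeries_bool_ite (v : σ →₀ ℕ) (hv : v ≠ 0) :
    countSeries (fun b : Bool => if b then v else 0) = 1 + monomial v 1 := by
  classical
  ext d
  rw [coeff_countSeries, map_add, coeff_one, coeff_monomial, Nat.card_eq_fintype_card,
    Fintype.card_subtype]
  by_cases h0 : d = 0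
  · subst h0
    simp [hv, Ne.symm hv, filter_insert, filter_singleton]
  · by_cases hvd : d = v
    · subst hvd
      simp [hv, Ne.symm hv, filter_insert]
    · simp [h0, hvd, Ne.symm hvd, Ne.symm h0]

section Multiples

variable {v : σ →₀ ℕ}

lemma nsmul_left_injective_of_ne_zero (hv : v ≠ 0) : Function.Injective fun i : ℕ => i • v :=
  (nsmul_left_strictMono (pos_iff_ne_zero.mpr hv)).injective

lemma finiteFibers_nsmul (hv : v ≠ 0) : FiniteFibers fun i : ℕ => i • v := fun d =>
  have : Subsingleton {i : ℕ // i • v = d} :=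
    ⟨fun a b => Subtype.ext (nsmul_left_injective_of_ne_zero hv (a.2.trans b.2.symm))⟩
  Finite.of_subsingleton

lemma ne_zero_of_nsmul_eq {d : σ →₀ ℕ} (hv : v ≠ 0) (hvd : v ≤ d) {i : ℕ} (hi : i • v = d) :
    i ≠ 0 := by
  rintro rfl
  rw [← hi, zero_smul] at hvd
  exact hv (le_zero_iff.mp hvd)

def nsmulFiberEquiv {d : σ →₀ ℕ} (hv : v ≠ 0) (hvd : v ≤ d) :
    {i : ℕ // i • v = d} ≃ {j : ℕ // j • v = d - v} where
  toFun i := ⟨i.1 - 1, eq_tsub_of_add_eq <| by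
    rw [← succ_nsmul, Nat.sub_one_add_one (ne_zero_of_nsmul_eq hv hvd i.2), i.2]⟩
  invFun j := ⟨j.1 + 1, by rw [succ_nsmul, j.2, tsub_add_cancel_of_le hvd]⟩
  left_inv i := Subtype.ext (Nat.sub_one_add_one (ne_zero_of_nsmul_eq hv hvd i.2))
  right_inv j := Subtype.ext (Nat.add_sub_cancel _ _)

lemma countSeries_nsmul_mul_one_sub (hv : v ≠ 0) :
    countSeries (fun i : ℕ => i • v) * (1 - monomial v 1) = 1 := by
  classical
  ext d
  rw [mul_sub, mul_one, map_sub, coeff_mul_monomial, coeff_one, coeff_countSeries]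
  split_ifs with hvd h0 h0
  · exact absurd (le_zero_iff.mp (h0 ▸ hvd)) hv
  · rw [coeff_countSeries, mul_one, sub_eq_zero, Nat.card_congr (nsmulFiberEquiv hv hvd)]
  · subst h0
    have : Unique {i : ℕ // i • v = 0} :=
      ⟨⟨⟨0, zero_smul ℕ v⟩⟩, fun i =>
        Subtype.ext (nsmul_left_injective_of_ne_zero hv (i.2.trans (zero_smul ℕ v).symm))⟩
    rw [Nat.card_unique]
    simp
  · have : IsEmpty {i : ℕ // i • v = d} :=
      ⟨fun i => hvd (i.2 ▸ le_self_nsmul zero_le fun h => h0 (by rw [← i.2, h, zero_smul]))⟩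
    simp [Nat.card_of_isEmpty]

end Multiples

end CountSeries

lemma coeff_mul_eq_of_coeff_eq {σ R : Type*} [Semiring R] {f g : MvPowerSeries σ R} (s : σ) (n : ℕ)
    (h : ∀ a : σ →₀ ℕ, a s ≤ n → coeff a f = coeff a g) (φ : MvPowerSeries σ R)
    {d : σ →₀ ℕ} (hd : d s ≤ n) : coeff d (f * φ) = coeff d (g * φ) := by
  classical
  rw [coeff_mul, coeff_mul]
  refine sum_congr rfl fun p hp => ?_
  have hle : p.1 ≤ d := mem_antidiagonal.mp hp ▸ le_self_add
  rw [h p.1 ((hle s).trans hd)]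

namespace Multiset

variable {ι α : Type*} [Fintype ι] [DecidableEq α]

lemma count_sum_replicate (c : ι → ℕ) (g : ι → α) (x : α) :
    count x (∑ k, replicate (c k) (g k)) = ∑ k with g k = x, c k := by
  simp [count_sum', count_replicate, sum_filter]

lemma count_sum_replicate_of_injective {g : ι → α} (hg : Function.Injective g) (c : ι → ℕ)
    (k : ι) : count (g k) (∑ k', replicate (c k') (g k')) = c k := by
  classical
  simp [count_sum_replicate, hg.eq_iff, Finset.sum_filter]

lemma sum_replicate_count_of_injective {g : ι → α} (hg : Function.Injective g) (m : Multiset α)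
    (hm : ∀ x ∈ m, x ∈ Set.range g) : ∑ k, replicate (m.count (g k)) (g k) = m := by
  ext x
  by_cases hx : x ∈ Set.range g
  · obtain ⟨k, rfl⟩ := hx
    exact count_sum_replicate_of_injective hg _ k
  · rw [count_sum_replicate, count_eq_zero_of_notMem fun h => hx (hm x h)]
    exact Finset.sum_eq_zero fun k hk => absurd ⟨k, (mem_filter.mp hk).2⟩ hx

end Multiset

noncomputable def sectorExponent (n mb mu : ℕ) : Fin 3 →₀ ℕ :=
  Finsupp.single 0 n + Finsupp.single 1 mb + Finsupp.single 2 mu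

@[simp] lemma sectorExponent_apply_zero (n mb mu : ℕ) : sectorExponent n mb mu 0 = n := by
  simp [sectorExponent]

@[simp] lemma sectorExponent_apply_one (n mb mu : ℕ) : sectorExponent n mb mu 1 = mb := by
  simp [sectorExponent]

@[simp] lemma sectorExponent_apply_two (n mb mu : ℕ) : sectorExponent n mb mu 2 = mu := by
  simp [sectorExponent]

lemma sectorExponent_eq_iff {n mb mu : ℕ} {d : Fin 3 →₀ ℕ} :
    sectorExponent n mb mu = d ↔ n = d 0 ∧ mb = d 1 ∧ mu = d 2 := by
  refine ⟨fun h => by simp [← h], fun ⟨h0, h1, h2⟩ => ?_⟩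
  ext i
  fin_cases i <;> simp [h0, h1, h2]

@[simp] lemma sectorExponent_eq_zero_iff {n mb mu : ℕ} :
    sectorExponent n mb mu = 0 ↔ n = 0 ∧ mb = 0 ∧ mu = 0 := by
  simp [sectorExponent_eq_iff]

lemma monomial_sectorExponent {R : Type*} [CommSemiring R] (n mb mu : ℕ) :
    monomial (sectorExponent n mb mu) (1 : R) = X 0 ^ n * X 1 ^ mb * X 2 ^ mu := by
  simp only [sectorExponent, X_pow_eq, monomial_mul_monomial, mul_one]

/-- `x` records whether `k` is overlined, whether `k` is underlined, the multiplicity of the bilined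
part `k` and that of the unmarked part `k + 1`. -/
noncomputable def localWeight (k : ℕ) (x : Bool × Bool × ℕ × ℕ) : Fin 3 →₀ ℕ :=
  (if x.1 then sectorExponent k 1 0 else 0) + ((if x.2.1 then sectorExponent k 0 1 else 0) +
    (x.2.2.1 • sectorExponent k 1 1 + x.2.2.2 • sectorExponent (k + 1) 0 0))

lemma finiteFibers_localWeight (k : ℕ) : FiniteFibers (localWeight k) :=
  (FiniteFibers.of_finite fun b : Bool => if b then sectorExponent k 1 0 else 0).add <|
    (FiniteFibers.of_finite fun b : Bool => if b then sectorExponent k 0 1 else 0).add <|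
      (finiteFibers_nsmul (v := sectorExponent k 1 1) (by simp)).add
        (finiteFibers_nsmul (v := sectorExponent (k + 1) 0 0) (by simp))

lemma countSeries_localWeight_mul (k : ℕ) :
    countSeries (localWeight k) * ((1 - X 1 * X 2 * X 0 ^ k) * (1 - X 0 ^ (k + 1))) =
      (1 + X 1 * X 0 ^ k) * (1 + X 2 * X 0 ^ k) := by
  have hBar := FiniteFibers.of_finite fun b : Bool => if b then sectorExponent k 1 0 else 0
  have hUnd := FiniteFibers.of_finite fun b : Bool => if b then sectorExponent k 0 1 else 0
  have hBil := finiteFibers_nsmul (v := sectorExponent k 1 1) (by simp)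
  have h0 := finiteFibers_nsmul (v := sectorExponent (k + 1) 0 0) (by simp)
  have hsplit : countSeries (localWeight k) =
      countSeries (fun b : Bool => if b then sectorExponent k 1 0 else 0) *
        (countSeries (fun b : Bool => if b then sectorExponent k 0 1 else 0) *
          (countSeries (fun i : ℕ => i • sectorExponent k 1 1) *
            countSeries (fun i : ℕ => i • sectorExponent (k + 1) 0 0))) := by
    rw [countSeries_mul hBil h0, countSeries_mul hUnd (hBil.add h0),
      countSeries_mul hBar (hUnd.add (hBil.add h0))]
    rfl
  have hBilInv := countSeries_nsmul_mul_one_sub (v := sectorExponent k 1 1) (by simp)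
  have h0Inv := countSeries_nsmul_mul_one_sub (v := sectorExponent (k + 1) 0 0) (by simp)
  rw [hsplit, countSeries_bool_ite _ (by simp), countSeries_bool_ite _ (by simp)]
  simp only [monomial_sectorExponent, pow_zero, pow_one, mul_one] at hBilInv h0Inv ⊢
  calc _ = (1 + X 0 ^ k * X 1) * (1 + X 0 ^ k * X 2) *
        ((countSeries (fun i : ℕ => i • sectorExponent k 1 1) * (1 - X 0 ^ k * X 1 * X 2)) *
          (countSeries (fun i : ℕ => i • sectorExponent (k + 1) 0 0) * (1 - X 0 ^ (k + 1)))) := by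
        ring
    _ = _ := by rw [hBilInv, h0Inv]; ring

namespace N2SuperPartition

variable {N : ℕ} {Λ : N2SuperPartition} {x : ℕ}

protected lemma ext {Λ₁ Λ₂ : N2SuperPartition} (h0 : Λ₁.lam0 = Λ₂.lam0)
    (hBar : Λ₁.lamBar = Λ₂.lamBar) (hUnd : Λ₁.lamUnd = Λ₂.lamUnd)
    (hBil : Λ₁.lamBil = Λ₂.lamBil) : Λ₁ = Λ₂ := by
  cases Λ₁
  cases Λ₂
  congr

lemma le_degree_of_mem_lam0 (hx : x ∈ Λ.lam0) : x ≤ Λ.degree := by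
  have := Multiset.le_sum_of_mem hx
  unfold degree; omega

lemma le_degree_of_mem_lamBar (hx : x ∈ Λ.lamBar) : x ≤ Λ.degree := by
  have : x ≤ Λ.lamBar.sum id := single_le_sum (f := id) (fun _ _ => Nat.zero_le _) hx
  unfold degree; omega

lemma le_degree_of_mem_lamUnd (hx : x ∈ Λ.lamUnd) : x ≤ Λ.degree := by
  have : x ≤ Λ.lamUnd.sum id := single_le_sum (f := id) (fun _ _ => Nat.zero_le _) hx
  unfold degree; omega

lemma le_degree_of_mem_lamBil (hx : x ∈ Λ.lamBil) : x ≤ Λ.degree := by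
  have := Multiset.le_sum_of_mem hx
  unfold degree; omega

def ofLocal (f : Fin N → Bool × Bool × ℕ × ℕ) : N2SuperPartition where
  lam0 := ∑ k, Multiset.replicate (f k).2.2.2 (k + 1)
  lam0_pos := by simp [Multiset.mem_sum, Multiset.mem_replicate]
  lamBar := (univ.filter fun k => (f k).1).map Fin.valEmbedding
  lamUnd := (univ.filter fun k => (f k).2.1).map Fin.valEmbedding
  lamBil := ∑ k, Multiset.replicate (f k).2.2.1 k

def toLocal (N : ℕ) (Λ : N2SuperPartition) (k : Fin N) : Bool × Bool × ℕ × ℕ :=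
  (decide ((k : ℕ) ∈ Λ.lamBar), decide ((k : ℕ) ∈ Λ.lamUnd), Λ.lamBil.count (k : ℕ),
    Λ.lam0.count ((k : ℕ) + 1))

lemma succ_val_injective : Function.Injective fun k : Fin N => (k : ℕ) + 1 :=
  fun _ _ h => Fin.val_injective (Nat.succ_injective h)

lemma toLocal_ofLocal (f : Fin N → Bool × Bool × ℕ × ℕ) : toLocal N (ofLocal f) = f := by
  funext k
  simp [toLocal, ofLocal, Fin.val_inj,
    Multiset.count_sum_replicate_of_injective Fin.val_injective,
    Multiset.count_sum_replicate_of_injective succ_val_injective]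

lemma ofLocal_toLocal (hΛ : Λ.degree < N) : ofLocal (toLocal N Λ) = Λ := by
  refine N2SuperPartition.ext ?_ ?_ ?_ ?_
  · change ∑ k : Fin N, Multiset.replicate (Λ.lam0.count ((k : ℕ) + 1)) ((k : ℕ) + 1) = Λ.lam0
    refine Multiset.sum_replicate_count_of_injective succ_val_injective _ fun x hx => ?_
    have := le_degree_of_mem_lam0 hx
    have := Nat.pos_of_ne_zero fun h => Λ.lam0_pos (h ▸ hx)
    exact ⟨⟨x - 1, by omega⟩, by simp; omega⟩
  · ext x
    simp only [ofLocal, toLocal, mem_map, mem_filter, mem_univ, true_and, decide_eq_true_eq,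
      Fin.valEmbedding_apply]
    exact ⟨fun ⟨k, hk, hkx⟩ => hkx ▸ hk,
      fun hx => ⟨⟨x, (le_degree_of_mem_lamBar hx).trans_lt hΛ⟩, hx, rfl⟩⟩
  · ext x
    simp only [ofLocal, toLocal, mem_map, mem_filter, mem_univ, true_and, decide_eq_true_eq,
      Fin.valEmbedding_apply]
    exact ⟨fun ⟨k, hk, hkx⟩ => hkx ▸ hk,
      fun hx => ⟨⟨x, (le_degree_of_mem_lamUnd hx).trans_lt hΛ⟩, hx, rfl⟩⟩
  · change ∑ k : Fin N, Multiset.replicate (Λ.lamBil.count (k : ℕ)) (k : ℕ) = Λ.lamBil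
    exact Multiset.sum_replicate_count_of_injective Fin.val_injective _ fun x hx =>
      ⟨⟨x, (le_degree_of_mem_lamBil hx).trans_lt hΛ⟩, rfl⟩

lemma sectorExponent_ofLocal (f : Fin N → Bool × Bool × ℕ × ℕ) :
    sectorExponent (ofLocal f).degree (ofLocal f).mBar (ofLocal f).mUnd =
      ∑ k : Fin N, localWeight k (f k) := by
  ext i
  fin_cases i <;>
    simp [ofLocal, degree, mBar, mUnd, localWeight, Multiset.sum_sum, Multiset.card_sum,
      sum_add_distrib, DFunLike.ite_apply, sum_filter, card_filter, -sum_boole]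
  ring

end N2SuperPartition

open N2SuperPartition in
lemma superPartitionCount_eq_card {N : ℕ} {d : Fin 3 →₀ ℕ} (hd : d 0 < N) :
    superPartitionCount (d 0) (d 1) (d 2) =
      Nat.card {f : Fin N → Bool × Bool × ℕ × ℕ // ∑ k : Fin N, localWeight k (f k) = d} := by
  have hweight (f : Fin N → Bool × Bool × ℕ × ℕ) :
      ∑ k : Fin N, localWeight k (f k) = d ↔
        (ofLocal f).degree = d 0 ∧ (ofLocal f).mBar = d 1 ∧ (ofLocal f).mUnd = d 2 := by
    rw [← sectorExponent_ofLocal, sectorExponent_eq_iff]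
  rw [superPartitionCount, ← Nat.card_coe_set_eq]
  exact Nat.card_congr
    { toFun Λ := ⟨toLocal N Λ.1,
        (hweight _).mpr (by rw [ofLocal_toLocal (Λ.2.1.trans_lt hd)]; exact Λ.2)⟩
      invFun f := ⟨ofLocal f.1, (hweight f.1).mp f.2⟩
      left_inv Λ := Subtype.ext (ofLocal_toLocal (Λ.2.1.trans_lt hd))
      right_inv f := Subtype.ext (toLocal_ofLocal f.1) }

lemma coeff_superPartitionGF_of_lt {N : ℕ} {d : Fin 3 →₀ ℕ} (hd : d 0 < N) :
    coeff d superPartitionGF = coeff d (∏ k : Fin N, countSeries (localWeight k)) := by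
  rw [prod_countSeries fun k => finiteFibers_localWeight k, coeff_countSeries,
    ← superPartitionCount_eq_card hd]
  rfl

/-- The generating function identity
`Σ p(n,m̄,m̲) qⁿ ξ^m̄ γ^m̲ = Π_{k≥0} (1+ξqᵏ)(1+γqᵏ)/((1-ξγqᵏ)(1-q^{k+1}))`,
stated in the equivalent denominator-cleared, truncated form: since every factor with index
`k > n` is `≡ 1` modulo `q^{n+1}`, for every coefficient with `q`-exponent at most `n` one has
`P · Π_{k=0}^{n} (1-ξγqᵏ)(1-q^{k+1}) = Π_{k=0}^{n} (1+ξqᵏ)(1+γqᵏ)`. -/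
theorem superPartition_generating_function (n : ℕ) (d : Fin 3 →₀ ℕ) (hd : d 0 ≤ n) :
    MvPowerSeries.coeff (R := ℤ) d
      (superPartitionGF *
        ∏ k ∈ Finset.range (n + 1),
          ((1 - MvPowerSeries.X 1 * MvPowerSeries.X 2 * MvPowerSeries.X 0 ^ k) *
            (1 - MvPowerSeries.X 0 ^ (k + 1)))) =
    MvPowerSeries.coeff (R := ℤ) d
      (∏ k ∈ Finset.range (n + 1),
        ((1 + MvPowerSeries.X 1 * MvPowerSeries.X 0 ^ k) *
          (1 + MvPowerSeries.X 2 * MvPowerSeries.X 0 ^ k))) := by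
  have hP (a : Fin 3 →₀ ℕ) (ha : a 0 ≤ n) :=
    coeff_superPartitionGF_of_lt (N := n + 1) (Nat.lt_succ_of_le ha)
  rw [coeff_mul_eq_of_coeff_eq 0 n hP _ hd, ← Fin.prod_univ_eq_prod_range,
    ← Fin.prod_univ_eq_prod_range, ← prod_mul_distrib]
  exact congrArg _ (prod_congr rfl fun k _ => countSeries_localWeight_mul k)
end

section
/- The Newton-type recursion for the N=2 barred homogeneous functions holds: (n+1)·h̄ₙ = Σ_{r=0}^{n} (pᵣ·h̄_{n-r} + (r+1)·p̄ᵣ·h_{n-r}), as an identity in the ring of symmetric superfunctions, where h and p generating functions are related by H·P = (t∂ₜ + τ̲∂_{τ̲} + τ̄∂_{τ̄})H. -/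
open MvPolynomial

variable {N : ℕ} {R : Type*}

/-- The complete homogeneous symmetric polynomial `hₙ = Σ_{i₁≤...≤iₙ} x_{i₁}···x_{iₙ}`. -/
noncomputable def hPoly (N n : ℕ) : MvPolynomial (Fin N) ℤ :=
  ∑ m ∈ (Finset.univ : Finset (Fin N)).sym n, ((m : Multiset (Fin N)).map MvPolynomial.X).prod

/-- The power sum `pₙ = Σᵢ xᵢⁿ`, with the convention `p₀ = 0`. -/
noncomputable def pPoly (N : ℕ) : ℕ → MvPolynomial (Fin N) ℤ
  | 0 => 0
  | n + 1 => ∑ i, MvPolynomial.X i ^ (n + 1)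

section
variable [Ring R] [Algebra (MvPolynomial (Fin N) ℤ) R]

/-- `h̄ₙ = ⟪d̄ h_{n+1}⟫ = Σᵢ φᵢ ∂ᵢ h_{n+1}`. -/
noncomputable def hBar (φ : Fin N → R) (n : ℕ) : R :=
  ∑ i, φ i * algebraMap (MvPolynomial (Fin N) ℤ) R (MvPolynomial.pderiv i (hPoly N (n + 1)))

/-- `p̄ₙ = Σᵢ φᵢ xᵢⁿ`. -/
noncomputable def pBar' (φ : Fin N → R) (n : ℕ) : R :=
  ∑ i, φ i * algebraMap (MvPolynomial (Fin N) ℤ) R (MvPolynomial.X i ^ n)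

end

/-!
The operator `dBar φ = Σᵢ φᵢ ∂/∂xᵢ` (the paper's `d̄`) obeys the Leibniz rule and sends `h_{k+1}` to `h̄_k`
and `p_{r+1}` to `(r+1) p̄_r`. Applying it to the classical Newton identity
`(n+1) h_{n+1} = Σ_{r ≤ n} p_{r+1} h_{n-r}` and shifting the index of the `pᵣ h̄_{n-r}` terms gives the
recursion; the boundary terms vanish because `p₀ = 0` and `h₀ = 1`.
The classical identity counts each monomial `m` of degree `n+1` once per occurrence of each variable: the
monomials in which `a` occurs more than `r` times are exactly `x_a^{r+1}` times the monomials of degree `n-r`.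
-/

namespace Finset

open Multiset
variable {α M : Type*} [DecidableEq α] [AddCommMonoid M]

theorem sum_sym_add_replicate (s : Finset α) {a : α} (ha : a ∈ s) (n k : ℕ)
    (F : Multiset α → M) :
    ∑ m ∈ s.sym n, F (m + replicate k a) =
      ∑ m ∈ (s.sym (n + k)).filter (fun m : Sym α (n + k) => k ≤ count a m), F m := by
  refine sum_bij (fun m _ => m.append (Sym.replicate k a)) ?_ ?_ ?_ ?_
  · intro m hm
    rw [mem_filter, Sym.coe_append, Sym.coe_replicate, count_add, count_replicate_self]
    refine ⟨mem_sym_iff.2 fun b hb => ?_, le_add_self⟩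
    rcases Sym.mem_append_iff.1 hb with hb | hb
    · exact mem_sym_iff.1 hm b hb
    · rw [(Sym.mem_replicate.1 hb).2]
      exact ha
  · intro m _ m' _ h
    exact (Sym.append_inj_left _).1 h
  · intro m hm
    rw [mem_filter, mem_sym_iff, le_count_iff_replicate_le] at hm
    refine ⟨Sym.mk (m - replicate k a) (by simp [card_sub hm.2]), ?_, ?_⟩
    · exact mem_sym_iff.2 fun b hb => hm.1 b (Multiset.mem_of_le (Multiset.sub_le_self _ _) hb)
    · apply Sym.ext
      rw [Sym.coe_append, Sym.coe_replicate]
      exact tsub_add_cancel_of_le hm.2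
  · intro m _
    simp [Sym.coe_append, Sym.coe_replicate]

theorem sum_count_nsmul_sym (s : Finset α) (a : α) (n : ℕ) (F : Multiset α → M) :
    ∑ m ∈ s.sym n, count a m • F m =
      ∑ k ∈ range n, ∑ m ∈ (s.sym n).filter (fun m : Sym α n => k < count a m), F m := by
  simp only [sum_filter]
  rw [sum_comm]
  refine sum_congr rfl fun m _ => ?_
  have hm : (range n).filter (· < count a (m : Multiset α)) = range (count a m) := by
    ext k
    have := count_le_card a (m : Multiset α)
    simp only [mem_filter, mem_range, Sym.card_coe] at this ⊢
    omega
  rw [← sum_filter, hm, sum_const, card_range]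

variable {S : Type*} [CommSemiring S]

theorem pow_mul_sum_sym_prod_map (s : Finset α) {a : α} (ha : a ∈ s) (g : α → S) (n k : ℕ) :
    g a ^ k * ∑ m ∈ s.sym n, ((m : Multiset α).map g).prod =
      ∑ m ∈ (s.sym (n + k)).filter (fun m : Sym α (n + k) => k ≤ count a m),
        ((m : Multiset α).map g).prod := by
  rw [← sum_sym_add_replicate s ha n k fun m => (m.map g).prod, mul_sum]
  refine sum_congr rfl fun m _ => ?_
  rw [Multiset.map_add, Multiset.prod_add, map_replicate, prod_replicate, mul_comm]

theorem succ_nsmul_sum_sym_prod_map (s : Finset α) (g : α → S) (n : ℕ) :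
    (n + 1) • ∑ m ∈ s.sym (n + 1), ((m : Multiset α).map g).prod =
      ∑ r ∈ range (n + 1),
        (∑ a ∈ s, g a ^ (r + 1)) * ∑ m ∈ s.sym (n - r), ((m : Multiset α).map g).prod := by
  have layer (a : α) (ha : a ∈ s) (r : ℕ) (hr : r ∈ range (n + 1)) :
      ∑ m ∈ (s.sym (n + 1)).filter (fun m : Sym α (n + 1) => r < count a m),
        ((m : Multiset α).map g).prod =
      g a ^ (r + 1) * ∑ m ∈ s.sym (n - r), ((m : Multiset α).map g).prod := by
    obtain ⟨j, rfl⟩ : ∃ j, n = j + r := ⟨n - r, by grind⟩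
    rw [Nat.add_sub_cancel, pow_mul_sum_sym_prod_map s ha, add_assoc]
    simp only [Nat.lt_iff_add_one_le]
  calc (n + 1) • ∑ m ∈ s.sym (n + 1), ((m : Multiset α).map g).prod
      = ∑ a ∈ s, ∑ m ∈ s.sym (n + 1), count a m • ((m : Multiset α).map g).prod := by
        rw [sum_comm, smul_sum]
        refine sum_congr rfl fun m hm => ?_
        rw [← sum_smul, sum_count_of_mem_sym hm]
    _ = ∑ a ∈ s, ∑ r ∈ range (n + 1), g a ^ (r + 1) *
          ∑ m ∈ s.sym (n - r), ((m : Multiset α).map g).prod := by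
        refine sum_congr rfl fun a ha => ?_
        rw [sum_count_nsmul_sym s a (n + 1) fun m => (m.map g).prod]
        exact sum_congr rfl (layer a ha)
    _ = _ := by
        rw [sum_comm]
        simp only [sum_mul]

end Finset

theorem hPoly_newton (N n : ℕ) :
    (n + 1) • hPoly N (n + 1) =
      ∑ r ∈ Finset.range (n + 1), pPoly N (r + 1) * hPoly N (n - r) :=
  Finset.succ_nsmul_sum_sym_prod_map _ _ n

theorem hPoly_zero (N : ℕ) : hPoly N 0 = 1 := by
  rw [hPoly, Finset.sym_zero, Finset.sum_singleton]
  rfl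

section dBar

variable {σ S : Type*} [Fintype σ] [CommSemiring S] [Semiring R] [Algebra (MvPolynomial σ S) R]

noncomputable def dBar (φ : σ → R) : MvPolynomial σ S →+ R where
  toFun p := ∑ i, φ i * algebraMap _ R (pderiv i p)
  map_zero' := by simp
  map_add' p q := by simp [mul_add, Finset.sum_add_distrib]

theorem dBar_apply (φ : σ → R) (p : MvPolynomial σ S) :
    dBar φ p = ∑ i, φ i * algebraMap _ R (pderiv i p) :=
  rfl

theorem dBar_mul (φ : σ → R) (p q : MvPolynomial σ S) :
    dBar φ (p * q) = dBar φ p * algebraMap _ R q + algebraMap _ R p * dBar φ q := by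
  rw [dBar_apply, dBar_apply, dBar_apply, Finset.sum_mul, Finset.mul_sum, ← Finset.sum_add_distrib]
  refine Finset.sum_congr rfl fun i _ => ?_
  have hφ : φ i * algebraMap _ R p = algebraMap _ R p * φ i := (Algebra.commutes p (φ i)).symm
  rw [pderiv_mul, map_add, map_mul, map_mul, mul_add, ← mul_assoc (φ i) (algebraMap _ R p), hφ]
  simp only [mul_assoc]

theorem dBar_one (φ : σ → R) : dBar φ (1 : MvPolynomial σ S) = 0 := by
  simp [dBar_apply]

theorem pderiv_sum_X_pow_succ (i : σ) (r : ℕ) :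
    pderiv i (∑ j, X j ^ (r + 1) : MvPolynomial σ S) = (r + 1) • X i ^ r := by
  rw [map_sum, Finset.sum_eq_single i (fun j _ hj => by simp [pderiv_X_of_ne hj])
    (by simp)]
  simp [nsmul_eq_mul]

theorem dBar_sum_X_pow_succ (φ : σ → R) (r : ℕ) :
    dBar φ (∑ j, X j ^ (r + 1) : MvPolynomial σ S) =
      (r + 1) • ∑ i, φ i * algebraMap (MvPolynomial σ S) R (X i ^ r) := by
  simp only [dBar_apply, pderiv_sum_X_pow_succ, map_nsmul, mul_smul_comm, Finset.smul_sum]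

end dBar

section

variable [Ring R] [Algebra (MvPolynomial (Fin N) ℤ) R]

theorem hBar_eq_dBar (φ : Fin N → R) (n : ℕ) : hBar φ n = dBar φ (hPoly N (n + 1)) :=
  rfl

theorem dBar_pPoly_succ (φ : Fin N → R) (r : ℕ) :
    dBar φ (pPoly N (r + 1)) = (r + 1) • pBar' φ r :=
  dBar_sum_X_pow_succ φ r

theorem sum_pPoly_succ_mul_dBar_hPoly (φ : Fin N → R) (n : ℕ) :
    ∑ r ∈ Finset.range (n + 1),
        algebraMap (MvPolynomial (Fin N) ℤ) R (pPoly N (r + 1)) * dBar φ (hPoly N (n - r)) =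
      ∑ r ∈ Finset.range (n + 1),
        algebraMap (MvPolynomial (Fin N) ℤ) R (pPoly N r) * hBar φ (n - r) := by
  have hp₀ : pPoly N 0 = 0 := rfl
  rw [Finset.sum_range_succ, Nat.sub_self, hPoly_zero, dBar_one, mul_zero, add_zero,
    Finset.sum_range_succ', hp₀, map_zero, zero_mul, add_zero]
  refine Finset.sum_congr rfl fun r hr => ?_
  rw [hBar_eq_dBar, show n - (r + 1) + 1 = n - r by grind]

end

theorem hBar_newton_recursion_general
    [Ring R] [Algebra (MvPolynomial (Fin N) ℤ) R]
    (φ : Fin N → R) (n : ℕ) :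
    (n + 1) • hBar φ n =
      ∑ r ∈ Finset.range (n + 1),
        (algebraMap (MvPolynomial (Fin N) ℤ) R (pPoly N r) * hBar φ (n - r)
          + (r + 1) • (pBar' φ r * algebraMap (MvPolynomial (Fin N) ℤ) R (hPoly N (n - r)))) := by
  have hnewton := congrArg (dBar φ) (hPoly_newton N n)
  simp only [map_nsmul, map_sum, dBar_mul, dBar_pPoly_succ, ← hBar_eq_dBar] at hnewton
  rw [hnewton, Finset.sum_add_distrib, Finset.sum_add_distrib, add_comm,
    sum_pPoly_succ_mul_dBar_hPoly]
  simp only [smul_mul_assoc]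

/-- The Newton-type recursion for the `N=2` barred homogeneous functions, the `τ̄`-sector
coefficient identity of `H·P = (t∂ₜ + τ̲∂_{τ̲} + τ̄∂_{τ̄})H`:
`(n+1)·h̄ₙ = Σ_{r=0}^{n} (pᵣ·h̄_{n-r} + (r+1)·p̄ᵣ·h_{n-r})`. -/
theorem hBar_newton_recursion
    [Ring R] [Algebra (MvPolynomial (Fin N) ℤ) R]
    (φ : Fin N → R)
    (hφφ : ∀ i j, φ i * φ j = -(φ j * φ i)) (n : ℕ) :
    (n + 1) • hBar φ n =
      ∑ r ∈ Finset.range (n + 1),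
        (algebraMap (MvPolynomial (Fin N) ℤ) R (pPoly N r) * hBar φ (n - r)
          + (r + 1) • (pBar' φ r * algebraMap (MvPolynomial (Fin N) ℤ) R (hPoly N (n - r)))) :=
  hBar_newton_recursion_general φ n
end

section
/- The dual Cauchy-type identity holds: H(t,τ̄,τ̲)·E(-t,-τ̄,-τ̲) = 1, where H(t,τ̄,τ̲) = Πᵢ 1/(1-(txᵢ+τ̄φᵢ+τ̲θᵢ)) and E(t,τ̄,τ̲) = Πᵢ (1+txᵢ+τ̄φᵢ+τ̲θᵢ). In particular, at the level of coefficients, Σ_{r=0}^{n}(-1)^r (e̿ᵣ h_{n-r} - h̄_{n-r} e̲ᵣ - ēᵣ h̲_{n-r} + eᵣ h̿_{n-r}) = 0 for all n ≥ 0. -/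
/-! Over the polynomials in the `xᵢ`, the series `∏ᵢ (1 - xᵢ t)` and `∏ᵢ (1 - xᵢ t)⁻¹` are
inverse, so `∑_{p+q=m} (-1)^p e_p h_q = 0` for `m > 0`. Applying `∂ᵢ∂ⱼ` at `m = n + 2` and
expanding by Leibniz gives, after an index shift past boundary terms that vanish because
`e₀ = h₀ = 1` and `e₁ = h₁ = ∑ xᵢ`, the `(i, j)` component of the claim. Since the
polynomials commute with `φ` and `θ`, each product in the claim is `∑ᵢⱼ φᵢ θⱼ ⟪Pᵢⱼ⟫` with
`Pᵢⱼ` that component's summand. -/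

open MvPolynomial

variable {N : ℕ} {R : Type*}

/-- The elementary symmetric polynomial `eₙ`. -/
noncomputable def ePoly (N n : ℕ) : MvPolynomial (Fin N) ℤ :=
  MvPolynomial.esymm (Fin N) ℤ n

section
variable [Ring R] [Algebra (MvPolynomial (Fin N) ℤ) R]

/-- Lift of a polynomial in the `x`'s to `R`. -/
noncomputable def lift' (f : MvPolynomial (Fin N) ℤ) : R :=
  algebraMap (MvPolynomial (Fin N) ℤ) R f

/-- `⟪d̄ f⟫ = Σᵢ φᵢ ∂ᵢ f` for a family `φ` of odd variables. -/
noncomputable def dOdd (φ : Fin N → R) (f : MvPolynomial (Fin N) ℤ) : R :=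
  ∑ i, φ i * lift' (MvPolynomial.pderiv i f)

/-- `⟪d̄ d̲ f⟫ = Σ_{i,j} φᵢ θⱼ ∂ᵢ∂ⱼ f`. -/
noncomputable def dOdd2 (φ θ : Fin N → R) (f : MvPolynomial (Fin N) ℤ) : R :=
  ∑ i, ∑ j, φ i * θ j * lift' (MvPolynomial.pderiv i (MvPolynomial.pderiv j f))

end

namespace PowerSeries

theorem one_sub_C_mul_X_mul_mk_pow {A : Type*} [CommRing A] (a : A) :
    (1 - C a * X) * mk (fun n => a ^ n) = 1 := by
  simpa [rescale_mk, mul_comm] using congrArg (rescale a) (mk_one_mul_one_sub_eq_one A)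

theorem coeff_prod_one_sub_C_mul_X {ι A : Type*} [CommRing A] (s : Finset ι) (y : ι → A)
    (k : ℕ) :
    coeff k (∏ i ∈ s, (1 - C (y i) * X)) = (-1) ^ k * ∑ t ∈ s.powersetCard k, ∏ i ∈ t, y i := by
  classical
  have hterm (t : Finset ι) :
      ∏ i ∈ t, -(C (y i) * X) = C ((-1) ^ t.card * ∏ i ∈ t, y i) * X ^ t.card := by
    rw [Finset.prod_neg, Finset.prod_mul_distrib, Finset.prod_const, map_mul, map_pow, map_neg,
      map_one, map_prod]
    ring
  simp_rw [sub_eq_add_neg, Finset.prod_one_add, hterm, map_sum, coeff_C_mul_X_pow]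
  rw [← Finset.sum_filter, Finset.powersetCard_eq_filter, Finset.mul_sum]
  refine Finset.sum_congr (by simp [eq_comm]) fun t ht => ?_
  rw [(Finset.mem_filter.1 ht).2]

end PowerSeries

namespace MvPolynomial

open Finset

variable {σ : Type*}

theorem pderiv_pderiv_mul [CommSemiring R] (i j : σ) (f g : MvPolynomial σ R) :
    pderiv i (pderiv j (f * g)) = pderiv i (pderiv j f) * g + pderiv j f * pderiv i g
      + pderiv i f * pderiv j g + f * pderiv i (pderiv j g) := by
  simp only [Derivation.leibniz, map_add, smul_eq_mul]
  ring

variable [DecidableEq σ] [Fintype σ]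

theorem hsymm_eq_sum_finsuppAntidiag [CommSemiring R] (n : ℕ) :
    hsymm σ R n = ∑ l ∈ univ.finsuppAntidiag n, ∏ i, X i ^ l i := by
  symm
  refine sum_bij' (fun l hl => ⟨Finsupp.toMultiset l, ?_⟩)
    (fun s _ => Multiset.toFinsupp s.1) (fun _ _ => mem_univ _) (fun s _ => ?_)
    (fun l _ => Finsupp.toMultiset_toFinsupp l)
    (fun s _ => Sym.ext (Multiset.toFinsupp_toMultiset s.1)) (fun l _ => ?_)
  · rw [Finsupp.card_toMultiset, Finsupp.sum_fintype _ _ fun _ => rfl]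
    exact (mem_finsuppAntidiag.1 hl).1
  · simp only [mem_finsuppAntidiag, subset_univ, and_true]
    change ∑ i, Multiset.toFinsupp s.1 i = n
    simp [Multiset.toFinsupp_apply]
  · rw [Multiset.prod_map_eq_finprod, finprod_eq_prod_of_fintype]
    simp [Finsupp.count_toMultiset]

variable [CommRing R]

theorem sum_antidiagonal_esymm_mul_hsymm {m : ℕ} (hm : m ≠ 0) :
    ∑ p ∈ antidiagonal m, (-1 : ℤ) ^ p.1 • (esymm σ R p.1 * hsymm σ R p.2) = 0 := by
  have hE (k : ℕ) : PowerSeries.coeff k (∏ i, (1 - PowerSeries.C (X i) * PowerSeries.X)) =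
      (-1) ^ k * esymm σ R k :=
    PowerSeries.coeff_prod_one_sub_C_mul_X _ _ k
  have hH (k : ℕ) :
      PowerSeries.coeff k (∏ i, PowerSeries.mk fun n => (X i : MvPolynomial σ R) ^ n) =
        hsymm σ R k := by
    simp [PowerSeries.coeff_prod, hsymm_eq_sum_finsuppAntidiag]
  have hEH : (∏ i, (1 - PowerSeries.C (X i) * PowerSeries.X)) *
      ∏ i, PowerSeries.mk (fun n => (X i : MvPolynomial σ R) ^ n) = 1 := by
    simp [← prod_mul_distrib, PowerSeries.one_sub_C_mul_X_mul_mk_pow]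
  have h := congrArg (PowerSeries.coeff m) hEH
  rw [PowerSeries.coeff_mul, PowerSeries.coeff_one, if_neg hm] at h
  simpa [hE, hH, zsmul_eq_mul, mul_assoc] using h

theorem sum_antidiagonal_pderiv_pderiv_esymm_mul_hsymm (i j : σ) (n : ℕ) :
    ∑ p ∈ antidiagonal n, (-1 : ℤ) ^ p.1 •
      (pderiv i (pderiv j (esymm σ R (p.1 + 2))) * hsymm σ R p.2
        - pderiv i (hsymm σ R (p.2 + 1)) * pderiv j (esymm σ R (p.1 + 1))
        - pderiv i (esymm σ R (p.1 + 1)) * pderiv j (hsymm σ R (p.2 + 1))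
        + esymm σ R p.1 * pderiv i (pderiv j (hsymm σ R (p.2 + 2)))) = 0 := by
  have h := congrArg (fun f => pderiv i (pderiv j f))
    (sum_antidiagonal_esymm_mul_hsymm (σ := σ) (R := R) (m := n + 2) (by omega))
  simp only [map_sum, map_zsmul, pderiv_pderiv_mul, smul_add, sum_add_distrib, map_zero] at h
  have hDDe : ∑ p ∈ antidiagonal (n + 2), (-1 : ℤ) ^ p.1 •
      (pderiv i (pderiv j (esymm σ R p.1)) * hsymm σ R p.2) =
      ∑ p ∈ antidiagonal n, (-1 : ℤ) ^ p.1 •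
        (pderiv i (pderiv j (esymm σ R (p.1 + 2))) * hsymm σ R p.2) := by
    simp [Nat.sum_antidiagonal_succ, pow_succ]
  have hDeDh : ∑ p ∈ antidiagonal (n + 2), (-1 : ℤ) ^ p.1 •
      (pderiv j (esymm σ R p.1) * pderiv i (hsymm σ R p.2)) =
      -∑ p ∈ antidiagonal n, (-1 : ℤ) ^ p.1 •
        (pderiv i (hsymm σ R (p.2 + 1)) * pderiv j (esymm σ R (p.1 + 1))) := by
    rw [Nat.sum_antidiagonal_succ, Nat.sum_antidiagonal_succ']
    simp [pow_succ, mul_comm]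
  have hDeDh' : ∑ p ∈ antidiagonal (n + 2), (-1 : ℤ) ^ p.1 •
      (pderiv i (esymm σ R p.1) * pderiv j (hsymm σ R p.2)) =
      -∑ p ∈ antidiagonal n, (-1 : ℤ) ^ p.1 •
        (pderiv i (esymm σ R (p.1 + 1)) * pderiv j (hsymm σ R (p.2 + 1))) := by
    rw [Nat.sum_antidiagonal_succ, Nat.sum_antidiagonal_succ']
    simp [pow_succ]
  have hDDh : ∑ p ∈ antidiagonal (n + 2), (-1 : ℤ) ^ p.1 •
      (esymm σ R p.1 * pderiv i (pderiv j (hsymm σ R p.2))) =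
      ∑ p ∈ antidiagonal n, (-1 : ℤ) ^ p.1 •
        (esymm σ R p.1 * pderiv i (pderiv j (hsymm σ R (p.2 + 2)))) := by
    simp [Nat.sum_antidiagonal_succ', pow_succ]
  rw [hDDe, hDeDh, hDeDh', hDDh] at h
  simp only [smul_sub, smul_add, sum_add_distrib, sum_sub_distrib]
  linear_combination h

end MvPolynomial

theorem hPoly_eq_hsymm (n : ℕ) : hPoly N n = hsymm (Fin N) ℤ n := by
  rw [hPoly, hsymm, Finset.sym_univ]
  rfl

section OddVariables

variable [Ring R] [Algebra (MvPolynomial (Fin N) ℤ) R] (φ θ : Fin N → R)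

theorem dOdd2_mul_lift' (f g : MvPolynomial (Fin N) ℤ) :
    dOdd2 φ θ f * lift' g = ∑ i, ∑ j, φ i * θ j * lift' (pderiv i (pderiv j f) * g) := by
  simp only [dOdd2, lift', Finset.sum_mul, map_mul, mul_assoc]

theorem lift'_mul_dOdd2 (f g : MvPolynomial (Fin N) ℤ) :
    lift' f * dOdd2 φ θ g = ∑ i, ∑ j, φ i * θ j * lift' (f * pderiv i (pderiv j g)) := by
  simp only [dOdd2, Finset.mul_sum]
  refine Finset.sum_congr rfl fun i _ => Finset.sum_congr rfl fun j _ => ?_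
  rw [lift', lift', lift', map_mul, ← mul_assoc, Algebra.commutes, mul_assoc]

theorem dOdd_mul_dOdd (f g : MvPolynomial (Fin N) ℤ) :
    dOdd φ f * dOdd θ g = ∑ i, ∑ j, φ i * θ j * lift' (pderiv i f * pderiv j g) := by
  rw [dOdd, dOdd, Finset.sum_mul]
  refine Finset.sum_congr rfl fun i _ => ?_
  rw [Finset.mul_sum]
  refine Finset.sum_congr rfl fun j _ => ?_
  rw [lift', lift', lift', map_mul, mul_assoc, ← Algebra.left_comm, ← mul_assoc, mul_assoc]

end OddVariables

/-- Here `ēₙ = ⟪d̄ e_{n+1}⟫`, `e̲ₙ = ⟪d̲ e_{n+1}⟫`, `e̿ₙ = ⟪d̄ d̲ e_{n+2}⟫`, and likewise for `h`. -/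
theorem he_dual_bilined_identity_general
    [Ring R] [Algebra (MvPolynomial (Fin N) ℤ) R]
    (φ θ : Fin N → R) (n : ℕ) :
    ∑ r ∈ Finset.range (n + 1),
      ((-1 : ℤ) ^ r) •
        (dOdd2 φ θ (ePoly N (r + 2)) * (lift' (hPoly N (n - r)) : R)
          - dOdd φ (hPoly N (n - r + 1)) * dOdd θ (ePoly N (r + 1))
          - dOdd φ (ePoly N (r + 1)) * dOdd θ (hPoly N (n - r + 1))
          + lift' (ePoly N r) * dOdd2 φ θ (hPoly N (n - r + 2))) = 0 := by
  simp only [dOdd2_mul_lift', dOdd_mul_dOdd, lift'_mul_dOdd2]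
  simp only [lift', ← Finset.sum_sub_distrib, ← Finset.sum_add_distrib, ← mul_sub, ← mul_add,
    ← map_sub, ← map_add, Finset.smul_sum, ← mul_smul_comm, ← map_zsmul]
  rw [Finset.sum_comm]
  refine Finset.sum_eq_zero fun i _ => ?_
  rw [Finset.sum_comm]
  refine Finset.sum_eq_zero fun j _ => ?_
  have h := MvPolynomial.sum_antidiagonal_pderiv_pderiv_esymm_mul_hsymm (R := ℤ) i j n
  rw [Finset.Nat.sum_antidiagonal_eq_sum_range_succ_mk] at h
  simp only [ePoly, hPoly_eq_hsymm]
  rw [← Finset.mul_sum, ← map_sum, h, map_zero, mul_zero]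

/-- The `τ̄τ̲`-sector coefficient identity of the dual Cauchy relation
`H(t,τ̄,τ̲)·E(-t,-τ̄,-τ̲) = 1`:
`Σ_{r=0}^{n}(-1)ʳ (e̿ᵣ h_{n-r} - h̄_{n-r} e̲ᵣ - ēᵣ h̲_{n-r} + eᵣ h̿_{n-r}) = 0`,
where `ēₙ = ⟪d̄ e_{n+1}⟫`, `e̲ₙ = ⟪d̲ e_{n+1}⟫`, `e̿ₙ = ⟪d̄ d̲ e_{n+2}⟫`, and likewise for `h`. -/
theorem he_dual_bilined_identity
    [Ring R] [Algebra (MvPolynomial (Fin N) ℤ) R]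
    (φ θ : Fin N → R)
    (hφφ : ∀ i j, φ i * φ j = -(φ j * φ i))
    (hθθ : ∀ i j, θ i * θ j = -(θ j * θ i))
    (hφθ : ∀ i j, φ i * θ j = -(θ j * φ i)) (n : ℕ) :
    ∑ r ∈ Finset.range (n + 1),
      ((-1 : ℤ) ^ r) •
        (dOdd2 φ θ (ePoly N (r + 2)) * (lift' (hPoly N (n - r)) : R)
          - dOdd φ (hPoly N (n - r + 1)) * dOdd θ (ePoly N (r + 1))
          - dOdd φ (ePoly N (r + 1)) * dOdd θ (hPoly N (n - r + 1))
          + lift' (ePoly N r) * dOdd2 φ θ (hPoly N (n - r + 2))) = 0 :=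
  he_dual_bilined_identity_general φ θ n
end

section
/- The homomorphism ω̂ defined on the generators by ω̂(eₙ)=hₙ, ω̂(ēₙ)=h̄ₙ, ω̂(e̲ₙ)=h̲ₙ, ω̂(e̿ₙ)=h̿ₙ is an involution: ω̂(hₙ)=eₙ, ω̂(h̄ₙ)=ēₙ, ω̂(h̲ₙ)=e̲ₙ, ω̂(h̿ₙ)=e̿ₙ. The proof of ω̂(h̿ₙ)=e̿ₙ follows by induction from the relation Σ_{r=0}^{n}(-1)^r(e̿ᵣh_{n-r} - h̄_{n-r}e̲ᵣ - ēᵣh̲_{n-r} + eᵣh̿_{n-r}) = 0. -/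
open Finset

private lemma reflect_aux {R : Type*} [AddCommGroup R] (n : ℕ) (f : ℕ → ℕ → R) :
    ∑ r ∈ range (n + 1), ((-1 : ℤ) ^ r) • f r (n - r) =
      (-1 : ℤ) ^ n • ∑ r ∈ range (n + 1), ((-1 : ℤ) ^ r) • f (n - r) r := by
  rw [smul_sum, ← Finset.sum_range_reflect
    (fun r => (-1 : ℤ) ^ n • ((-1 : ℤ) ^ r) • f (n - r) r) (n + 1)]
  refine Finset.sum_congr rfl fun j hj => ?_
  have hj' : j ≤ n := Nat.lt_succ_iff.mp (mem_range.mp hj)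
  simp only [Nat.add_sub_cancel]
  rw [Nat.sub_sub_self hj', smul_smul]
  congr 1
  have key : (-1 : ℤ) ^ n * (-1 : ℤ) ^ (n - j) = (-1 : ℤ) ^ j := by
    rw [← pow_add]
    have hnj : n + (n - j) = 2 * (n - j) + j := by omega
    rw [hnj, pow_add, pow_mul]
    norm_num
  exact key.symm

private lemma peel_zero {R : Type*} [Ring R] (n : ℕ) (c A B : ℕ → R) (hc : c 0 = 1)
    (hs : ∑ r ∈ range (n + 1), ((-1 : ℤ) ^ r) • (c r * A (n - r)) =
          ∑ r ∈ range (n + 1), ((-1 : ℤ) ^ r) • (c r * B (n - r)))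
    (hAB : ∀ m, m < n → A m = B m) : A n = B n := by
  rw [sum_range_succ', sum_range_succ'] at hs
  simp only [pow_zero, one_smul, Nat.sub_zero, hc, one_mul] at hs
  have h2 : ∑ r ∈ range n, ((-1 : ℤ) ^ (r + 1)) • (c (r + 1) * A (n - (r + 1))) =
      ∑ r ∈ range n, ((-1 : ℤ) ^ (r + 1)) • (c (r + 1) * B (n - (r + 1))) := by
    refine sum_congr rfl fun r hr => ?_
    have := mem_range.mp hr
    rw [hAB _ (by omega)]
  rw [h2] at hs
  exact add_left_cancel hs

/-- The homomorphism `ω̂` sending the elementary generators to the homogeneous ones is an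
involution: it sends the homogeneous generators back to the elementary ones.  Here the ring
`R` is generated by even elements `e, e̿, h, h̿` (central) and odd elements `ē, e̲, h̄, h̲`
(pairwise anticommuting), the `h`-generators being determined from the `e`-generators by the
recursions `Σᵣ(-1)ʳ eᵣ h_{n-r} = δ_{n,0}`,
`Σᵣ(-1)ʳ(eᵣ h̄_{n-r} - ēᵣ h_{n-r}) = 0` (and its underlined analogue), and
`Σᵣ(-1)ʳ(e̿ᵣ h_{n-r} - h̄_{n-r} e̲ᵣ - ēᵣ h̲_{n-r} + eᵣ h̿_{n-r}) = 0`. -/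
theorem omega_hat_involution {R : Type*} [Ring R]
    (e h ebb hbb : ℕ → R) (eb eu hb hu : ℕ → R)
    -- normalizations
    (he0 : e 0 = 1) (hh0 : h 0 = 1)
    -- even generators are central
    (hcentral : ∀ (f : ℕ → R), f ∈ [e, h, ebb, hbb] → ∀ n x, f n * x = x * f n)
    -- odd generators pairwise anticommute
    (hanti : ∀ (f g : ℕ → R), f ∈ [eb, eu, hb, hu] → g ∈ [eb, eu, hb, hu] →
      ∀ m n, f m * g n = -(g n * f m))
    -- the defining recursions (A-1, A-2, A-2', A-3)
    (hA1 : ∀ n, ∑ r ∈ range (n + 1), ((-1 : ℤ) ^ r) • (e r * h (n - r)) =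
      if n = 0 then 1 else 0)
    (hA2 : ∀ n, ∑ r ∈ range (n + 1),
      ((-1 : ℤ) ^ r) • (e r * hb (n - r) - eb r * h (n - r)) = 0)
    (hA2' : ∀ n, ∑ r ∈ range (n + 1),
      ((-1 : ℤ) ^ r) • (e r * hu (n - r) - eu r * h (n - r)) = 0)
    (hA3 : ∀ n, ∑ r ∈ range (n + 1),
      ((-1 : ℤ) ^ r) •
        (ebb r * h (n - r) - hb (n - r) * eu r - eb r * hu (n - r) + e r * hbb (n - r)) = 0)
    -- the homomorphism ω̂, sending e-generators to h-generators
    (ω : R →+* R)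
    (hωe : ∀ n, ω (e n) = h n) (hωeb : ∀ n, ω (eb n) = hb n)
    (hωeu : ∀ n, ω (eu n) = hu n) (hωebb : ∀ n, ω (ebb n) = hbb n) :
    ∀ n, ω (h n) = e n ∧ ω (hb n) = eb n ∧ ω (hu n) = eu n ∧ ω (hbb n) = ebb n := by
  -- centrality of the even generators
  have hce : ∀ m x, e m * x = x * e m := hcentral e (by simp)
  have hch : ∀ m x, h m * x = x * h m := hcentral h (by simp)
  have hcebb : ∀ m x, ebb m * x = x * ebb m := hcentral ebb (by simp)
  -- anticommutation instances
  have haeb_hu : ∀ m k, eb m * hu k = -(hu k * eb m) := hanti eb hu (by simp) (by simp)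
  have hahb_eu : ∀ m k, hb m * eu k = -(eu k * hb m) := hanti hb eu (by simp) (by simp)
  -- swapped recursion A1
  have hA1s : ∀ n, ∑ r ∈ range (n + 1), ((-1 : ℤ) ^ r) • (h r * e (n - r)) =
      if n = 0 then 1 else 0 := by
    intro n
    have h2 : ∑ r ∈ range (n + 1), ((-1 : ℤ) ^ r) • (h (n - r) * e r) =
        if n = 0 then 1 else 0 := by
      rw [← hA1 n]
      exact sum_congr rfl fun r _ => by rw [hce r]
    rw [reflect_aux n (fun a b => h a * e b), h2]
    rcases n with _ | n <;> simp
  -- swapped recursion A2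
  have hA2s : ∀ n, ∑ r ∈ range (n + 1),
      ((-1 : ℤ) ^ r) • (hb r * e (n - r) - h r * eb (n - r)) = 0 := by
    intro n
    have h2 : ∑ r ∈ range (n + 1), ((-1 : ℤ) ^ r) • (hb (n - r) * e r - h (n - r) * eb r)
        = 0 := by
      rw [← hA2 n]
      exact sum_congr rfl fun r _ => by rw [hce r (hb (n - r)), hch (n - r) (eb r)]
    rw [reflect_aux n (fun a b => hb a * e b - h a * eb b), h2, smul_zero]
  -- swapped recursion A2'
  have hA2's : ∀ n, ∑ r ∈ range (n + 1),
      ((-1 : ℤ) ^ r) • (hu r * e (n - r) - h r * eu (n - r)) = 0 := by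
    intro n
    have h2 : ∑ r ∈ range (n + 1), ((-1 : ℤ) ^ r) • (hu (n - r) * e r - h (n - r) * eu r)
        = 0 := by
      rw [← hA2' n]
      exact sum_congr rfl fun r _ => by rw [hce r (hu (n - r)), hch (n - r) (eu r)]
    rw [reflect_aux n (fun a b => hu a * e b - h a * eu b), h2, smul_zero]
  -- swapped recursion A3
  have hA3s : ∀ n, ∑ r ∈ range (n + 1),
      ((-1 : ℤ) ^ r) • (h r * ebb (n - r) + eu (n - r) * hb r + hu r * eb (n - r)
        + hbb r * e (n - r)) = 0 := by
    intro n
    have h2 : ∑ r ∈ range (n + 1), ((-1 : ℤ) ^ r) •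
        (h (n - r) * ebb r + eu r * hb (n - r) + hu (n - r) * eb r + hbb (n - r) * e r)
        = 0 := by
      rw [← hA3 n]
      refine sum_congr rfl fun r _ => ?_
      congr 1
      rw [hcebb r (h (n - r)), hce r (hbb (n - r)),
        hahb_eu (n - r) r, haeb_hu r (n - r)]
      abel
    rw [reflect_aux n (fun a b => h a * ebb b + eu b * hb a + hu a * eb b + hbb a * e b),
      h2, smul_zero]
  intro n
  induction n using Nat.strong_induction_on with
  | _ n ih =>
  -- Part 1 : ω (h n) = e n
  have E1 : ∑ r ∈ range (n + 1), ((-1 : ℤ) ^ r) • (h r * ω (h (n - r))) =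
      if n = 0 then 1 else 0 := by
    have := congrArg ω (hA1 n)
    simpa only [map_sum, map_zsmul, map_mul, hωe, apply_ite ω, map_one, map_zero] using this
  have P1 : ω (h n) = e n := by
    refine peel_zero n h (fun m => ω (h m)) e hh0 (E1.trans (hA1s n).symm) ?_
    exact fun m hm => (ih m hm).1
  have hωh : ∀ m, m ≤ n → ω (h m) = e m := by
    intro m hm
    rcases eq_or_lt_of_le hm with hm' | hm'
    · rw [hm']; exact P1
    · exact (ih m hm').1
  -- Part 2 : ω (hb n) = eb n
  have E2 : ∑ r ∈ range (n + 1),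
      ((-1 : ℤ) ^ r) • (h r * ω (hb (n - r)) - hb r * e (n - r)) = 0 := by
    have := congrArg ω (hA2 n)
    simp only [map_sum, map_zsmul, map_sub, map_mul, hωe, hωeb, map_zero] at this
    rw [← this]
    refine sum_congr rfl fun r hr => ?_
    have hr' := mem_range.mp hr
    rw [hωh (n - r) (by omega)]
  have E2' : ∑ r ∈ range (n + 1), ((-1 : ℤ) ^ r) • (h r * ω (hb (n - r))) =
      ∑ r ∈ range (n + 1), ((-1 : ℤ) ^ r) • (h r * eb (n - r)) := by
    rw [← sub_eq_zero, ← Finset.sum_sub_distrib]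
    have step : ∀ r ∈ range (n + 1),
        ((-1 : ℤ) ^ r) • (h r * ω (hb (n - r))) - ((-1 : ℤ) ^ r) • (h r * eb (n - r))
          = ((-1 : ℤ) ^ r) • (h r * ω (hb (n - r)) - hb r * e (n - r)) + ((-1 : ℤ) ^ r) • (hb r * e (n - r) - h r * eb (n - r)) := by
      intro r _
      simp only [← smul_sub, ← smul_add]
      congr 1
      abel
    rw [sum_congr rfl step, Finset.sum_add_distrib, E2, hA2s n, add_zero]
  have P2 : ω (hb n) = eb n :=
    peel_zero n h (fun m => ω (hb m)) eb hh0 E2' fun m hm => (ih m hm).2.1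
  -- Part 3 : ω (hu n) = eu n
  have E3 : ∑ r ∈ range (n + 1),
      ((-1 : ℤ) ^ r) • (h r * ω (hu (n - r)) - hu r * e (n - r)) = 0 := by
    have := congrArg ω (hA2' n)
    simp only [map_sum, map_zsmul, map_sub, map_mul, hωe, hωeu, map_zero] at this
    rw [← this]
    refine sum_congr rfl fun r hr => ?_
    have hr' := mem_range.mp hr
    rw [hωh (n - r) (by omega)]
  have E3' : ∑ r ∈ range (n + 1), ((-1 : ℤ) ^ r) • (h r * ω (hu (n - r))) =
      ∑ r ∈ range (n + 1), ((-1 : ℤ) ^ r) • (h r * eu (n - r)) := by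
    rw [← sub_eq_zero, ← Finset.sum_sub_distrib]
    have step : ∀ r ∈ range (n + 1),
        ((-1 : ℤ) ^ r) • (h r * ω (hu (n - r))) - ((-1 : ℤ) ^ r) • (h r * eu (n - r))
          = ((-1 : ℤ) ^ r) • (h r * ω (hu (n - r)) - hu r * e (n - r)) + ((-1 : ℤ) ^ r) • (hu r * e (n - r) - h r * eu (n - r)) := by
      intro r _
      simp only [← smul_sub, ← smul_add]
      congr 1
      abel
    rw [sum_congr rfl step, Finset.sum_add_distrib, E3, hA2's n, add_zero]
  have P3 : ω (hu n) = eu n :=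
    peel_zero n h (fun m => ω (hu m)) eu hh0 E3' fun m hm => (ih m hm).2.2.1
  -- knowledge of ω on hb, hu up to n
  have hωhb : ∀ m, m ≤ n → ω (hb m) = eb m := by
    intro m hm
    rcases eq_or_lt_of_le hm with hm' | hm'
    · rw [hm']; exact P2
    · exact (ih m hm').2.1
  have hωhu : ∀ m, m ≤ n → ω (hu m) = eu m := by
    intro m hm
    rcases eq_or_lt_of_le hm with hm' | hm'
    · rw [hm']; exact P3
    · exact (ih m hm').2.2.1
  -- Part 4 : ω (hbb n) = ebb n
  have E4 : ∑ r ∈ range (n + 1), ((-1 : ℤ) ^ r) •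
      (h r * ω (hbb (n - r)) + eu (n - r) * hb r + hu r * eb (n - r)
        + hbb r * e (n - r)) = 0 := by
    have := congrArg ω (hA3 n)
    simp only [map_sum, map_zsmul, map_add, map_sub, map_mul, hωe, hωeb, hωeu, hωebb,
      map_zero] at this
    rw [← this]
    refine sum_congr rfl fun r hr => ?_
    have hr' := mem_range.mp hr
    congr 1
    rw [hωh (n - r) (by omega), hωhb (n - r) (by omega), hωhu (n - r) (by omega),
      haeb_hu (n - r) r, hahb_eu r (n - r)]
    abel
  have E4' : ∑ r ∈ range (n + 1), ((-1 : ℤ) ^ r) • (h r * ω (hbb (n - r))) =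
      ∑ r ∈ range (n + 1), ((-1 : ℤ) ^ r) • (h r * ebb (n - r)) := by
    rw [← sub_eq_zero, ← Finset.sum_sub_distrib]
    have step : ∀ r ∈ range (n + 1),
        ((-1 : ℤ) ^ r) • (h r * ω (hbb (n - r))) - ((-1 : ℤ) ^ r) • (h r * ebb (n - r))
          = ((-1 : ℤ) ^ r) • (h r * ω (hbb (n - r)) + eu (n - r) * hb r + hu r * eb (n - r) + hbb r * e (n - r)) - ((-1 : ℤ) ^ r) • (h r * ebb (n - r) + eu (n - r) * hb r + hu r * eb (n - r) + hbb r * e (n - r)) := by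
      intro r _
      simp only [← smul_sub]
      congr 1
      abel
    rw [sum_congr rfl step, Finset.sum_sub_distrib, E4, hA3s n, sub_zero]
  have P4 : ω (hbb n) = ebb n :=
    peel_zero n h (fun m => ω (hbb m)) ebb hh0 E4' fun m hm => (ih m hm).2.2.2
  exact ⟨P1, P2, P3, P4⟩
end

section
/- The involution ω̂ acts on power sums as ω̂(pₙ)=(-1)^{n-1}pₙ, ω̂(p̄ₙ)=(-1)ⁿp̄ₙ, ω̂(p̲ₙ)=(-1)ⁿp̲ₙ, ω̂(p̿ₙ)=(-1)^{n-1}p̿ₙ; consequently ω̂(p_Λ) = (-1)^{|Λ| - ℓ(λ̿) - ℓ(λ⁰)} p_Λ for any N=2 superpartition Λ. -/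
open Finset

/-- The sign `(-1)ᵏ` for an integer exponent `k`, as an integer. -/
def intSign (k : ℤ) : ℤ := (((-1 : ℤˣ) ^ k : ℤˣ) : ℤ)

theorem intSign_key (S a b : ℕ) :
    intSign ((S:ℤ) - (a:ℤ) - (b:ℤ)) = (-1:ℤ)^(S + a + b) := by
  unfold intSign
  have h : (S:ℤ) - (a:ℤ) - (b:ℤ) = ((S + a + b : ℕ) : ℤ) - ((2*(a+b) : ℕ) : ℤ) := by
    push_cast; ring
  have h2 : ((-1:ℤˣ))^(2*(a+b)) = 1 := by rw [pow_mul, neg_one_sq, one_pow]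
  rw [h, zpow_sub, zpow_natCast, zpow_natCast, h2, inv_one, mul_one]
  simp [Units.val_pow_eq_pow_val]

theorem intSign_sub_one (n : ℕ) : intSign ((n:ℤ) - 1) = (-1:ℤ)^(n+1) := by
  simpa using intSign_key n 1 0

theorem intSign_nat (n : ℕ) : intSign (n:ℤ) = (-1:ℤ)^n := by
  simpa using intSign_key n 0 0

theorem zsmul_cancel {R : Type*} [Ring R] [Algebra ℚ R] {c : ℤ} (hc : c ≠ 0)
    {x y : R} (h : c • x = c • y) : x = y := by
  have h1 : ((c:ℚ)) • x = ((c:ℚ)) • y := by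
    rw [Int.cast_smul_eq_zsmul, Int.cast_smul_eq_zsmul]; exact h
  have hc' : (c:ℚ) ≠ 0 := Int.cast_ne_zero.mpr hc
  have h2 := congrArg (fun z : R => ((c:ℚ))⁻¹ • z) h1
  simpa [smul_smul, inv_mul_cancel₀ hc'] using h2

/-- The action of the involution `ω̂` (exchanging the elementary and homogeneous generators)
on the `N=2` power sums: `ω̂(pₙ) = (-1)^{n-1} pₙ`, `ω̂(p̄ₙ) = (-1)ⁿ p̄ₙ`,
`ω̂(p̲ₙ) = (-1)ⁿ p̲ₙ`, `ω̂(p̿ₙ) = (-1)^{n-1} p̿ₙ`; consequently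
`ω̂(p_Λ) = (-1)^{|Λ| - ℓ(λ̿) - ℓ(λ⁰)} p_Λ` for any `N=2` superpartition `Λ`
(given by the lists of values of its bilined, overlined, underlined and plain parts). -/
theorem omega_hat_on_power_sums {R : Type*} [Ring R] [Algebra ℚ R]
    (p pbb h hbb e ebb : ℕ → R) (pb pu hb hu eb eu : ℕ → R)
    (he0 : e 0 = 1) (hh0 : h 0 = 1) (hp0 : p 0 = 0)
    (hcentral : ∀ (f : ℕ → R), f ∈ [p, pbb, h, hbb, e, ebb] → ∀ n x, f n * x = x * f n)
    (hanti : ∀ (f g : ℕ → R), f ∈ [pb, pu, hb, hu, eb, eu] → g ∈ [pb, pu, hb, hu, eb, eu] →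
      ∀ m n, f m * g n = -(g n * f m))
    -- Newton recursions relating h and p (Table 2, block B)
    (hB1 : ∀ n, n • h n = ∑ r ∈ Icc 1 n, p r * h (n - r))
    (hB2 : ∀ n, (n + 1) • hb n =
      ∑ r ∈ range (n + 1), (p r * hb (n - r) + (r + 1) • (pb r * h (n - r))))
    (hB2' : ∀ n, (n + 1) • hu n =
      ∑ r ∈ range (n + 1), (p r * hu (n - r) + (r + 1) • (pu r * h (n - r))))
    (hB3 : ∀ n, (n + 2) • hbb n =
      ∑ r ∈ range (n + 1),
        (p r * hbb (n - r) + (r + 1) • (pb r * hu (n - r) + hb (n - r) * pu r)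
          + ((r + 2) * (r + 1)) • (pbb r * h (n - r))))
    -- Newton recursions relating e and p (Table 2, block C)
    (hC1 : ∀ n, n • e n = ∑ r ∈ Icc 1 n, ((-1 : ℤ) ^ (r + 1)) • (p r * e (n - r)))
    (hC2 : ∀ n, (n + 1) • eb n =
      ∑ r ∈ range (n + 1),
        ((-1 : ℤ) ^ (r + 1)) • (p r * eb (n - r) - (r + 1) • (pb r * e (n - r))))
    (hC2' : ∀ n, (n + 1) • eu n =
      ∑ r ∈ range (n + 1),
        ((-1 : ℤ) ^ (r + 1)) • (p r * eu (n - r) - (r + 1) • (pu r * e (n - r))))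
    (hC3 : ∀ n, (n + 2) • ebb n =
      ∑ r ∈ range (n + 1),
        ((-1 : ℤ) ^ (r + 1)) •
          (p r * ebb (n - r) - (r + 1) • (pb r * eu (n - r) + eb (n - r) * pu r)
            + ((r + 2) * (r + 1)) • (pbb r * e (n - r))))
    -- the involution ω̂, exchanging the elementary and the homogeneous generators
    (ω : R →+* R)
    (hωe : ∀ n, ω (e n) = h n) (hωeb : ∀ n, ω (eb n) = hb n)
    (hωeu : ∀ n, ω (eu n) = hu n) (hωebb : ∀ n, ω (ebb n) = hbb n)
    (hωh : ∀ n, ω (h n) = e n) (hωhb : ∀ n, ω (hb n) = eb n)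
    (hωhu : ∀ n, ω (hu n) = eu n) (hωhbb : ∀ n, ω (hbb n) = ebb n) :
    (∀ n : ℕ,
      ω (p n) = intSign ((n : ℤ) - 1) • p n ∧
      ω (pb n) = intSign (n : ℤ) • pb n ∧
      ω (pu n) = intSign (n : ℤ) • pu n ∧
      ω (pbb n) = intSign ((n : ℤ) - 1) • pbb n) ∧
    (∀ lbb lb lu l0 : List ℕ,
      ω ((lbb.map pbb).prod * (lb.map pb).prod * (lu.map pu).prod * (l0.map p).prod) =
        intSign (((lbb.sum + lb.sum + lu.sum + l0.sum : ℕ) : ℤ)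
            - (lbb.length : ℤ) - (l0.length : ℤ)) •
          ((lbb.map pbb).prod * (lb.map pb).prod * (lu.map pu).prod * (l0.map p).prod)) := by
  have main : ∀ n : ℕ,
      ω (p n) = ((-1:ℤ)^(n+1)) • p n ∧ ω (pb n) = ((-1:ℤ)^n) • pb n ∧
      ω (pu n) = ((-1:ℤ)^n) • pu n ∧ ω (pbb n) = ((-1:ℤ)^(n+1)) • pbb n := by
    intro n
    induction n using Nat.strong_induction_on with
    | _ n IH =>
    have Hp : ω (p n) = ((-1:ℤ)^(n+1)) • p n := by
      rcases n with _ | m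
      · rw [hp0]; simp
      · have h1 := congrArg ω (hB1 (m+1))
        rw [map_nsmul, hωh, map_sum] at h1
        simp only [map_mul, hωh] at h1
        have h3 := h1.symm.trans (hC1 (m+1))
        rw [Finset.sum_Icc_succ_top (by omega : 1 ≤ m+1),
          Finset.sum_Icc_succ_top (by omega : 1 ≤ m+1)] at h3
        have h4 : ∑ r ∈ Icc 1 m, ω (p r) * e (m+1-r)
            = ∑ r ∈ Icc 1 m, ((-1:ℤ)^(r+1)) • (p r * e (m+1-r)) := by
          refine Finset.sum_congr rfl fun r hr => ?_
          have hrm : r < m+1 := by have := (Finset.mem_Icc.mp hr).2; omega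
          rw [(IH r hrm).1, smul_mul_assoc]
        rw [h4] at h3
        have h5 := add_left_cancel h3
        simpa only [Nat.sub_self, he0, mul_one] using h5
    have Hpb : ω (pb n) = ((-1:ℤ)^n) • pb n := by
      have h1 := congrArg ω (hB2 n)
      rw [map_nsmul, hωhb, map_sum] at h1
      simp only [map_add, map_mul, map_nsmul, hωhb, hωh] at h1
      have h3 := h1.symm.trans (hC2 n)
      rw [Finset.sum_range_succ, Finset.sum_range_succ] at h3
      have h4 : ∑ r ∈ range n, (ω (p r) * eb (n-r) + (r+1) • (ω (pb r) * e (n-r)))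
          = ∑ r ∈ range n,
            ((-1:ℤ)^(r+1)) • (p r * eb (n-r) - (r+1) • (pb r * e (n-r))) := by
        refine Finset.sum_congr rfl fun r hr => ?_
        have hrn := Finset.mem_range.mp hr
        rw [(IH r hrn).1, (IH r hrn).2.1]
        simp only [smul_mul_assoc, ← natCast_zsmul]
        push_cast
        module
      rw [h4] at h3
      have h5 := add_left_cancel h3
      simp only [Nat.sub_self, he0, mul_one, Hp] at h5
      simp only [smul_mul_assoc, ← natCast_zsmul] at h5
      push_cast at h5
      have h6 : ((n:ℤ)+1) • ω (pb n) = ((n:ℤ)+1) • (((-1:ℤ)^n) • pb n) := by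
        linear_combination (norm := module) h5
      exact zsmul_cancel (by positivity) h6
    have Hpu : ω (pu n) = ((-1:ℤ)^n) • pu n := by
      have h1 := congrArg ω (hB2' n)
      rw [map_nsmul, hωhu, map_sum] at h1
      simp only [map_add, map_mul, map_nsmul, hωhu, hωh] at h1
      have h3 := h1.symm.trans (hC2' n)
      rw [Finset.sum_range_succ, Finset.sum_range_succ] at h3
      have h4 : ∑ r ∈ range n, (ω (p r) * eu (n-r) + (r+1) • (ω (pu r) * e (n-r)))
          = ∑ r ∈ range n,
            ((-1:ℤ)^(r+1)) • (p r * eu (n-r) - (r+1) • (pu r * e (n-r))) := by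
        refine Finset.sum_congr rfl fun r hr => ?_
        have hrn := Finset.mem_range.mp hr
        rw [(IH r hrn).1, (IH r hrn).2.2.1]
        simp only [smul_mul_assoc, ← natCast_zsmul]
        push_cast
        module
      rw [h4] at h3
      have h5 := add_left_cancel h3
      simp only [Nat.sub_self, he0, mul_one, Hp] at h5
      simp only [smul_mul_assoc, ← natCast_zsmul] at h5
      push_cast at h5
      have h6 : ((n:ℤ)+1) • ω (pu n) = ((n:ℤ)+1) • (((-1:ℤ)^n) • pu n) := by
        linear_combination (norm := module) h5
      exact zsmul_cancel (by positivity) h6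
    have Hpbb : ω (pbb n) = ((-1:ℤ)^(n+1)) • pbb n := by
      have h1 := congrArg ω (hB3 n)
      rw [map_nsmul, hωhbb, map_sum] at h1
      simp only [map_add, map_mul, map_nsmul, hωhbb, hωhu, hωhb, hωh] at h1
      have h3 := h1.symm.trans (hC3 n)
      rw [Finset.sum_range_succ, Finset.sum_range_succ] at h3
      have h4 : ∑ r ∈ range n,
            (ω (p r) * ebb (n-r) + (r+1) • (ω (pb r) * eu (n-r) + eb (n-r) * ω (pu r))
              + ((r+2)*(r+1)) • (ω (pbb r) * e (n-r)))
          = ∑ r ∈ range n,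
            ((-1:ℤ)^(r+1)) •
              (p r * ebb (n-r) - (r+1) • (pb r * eu (n-r) + eb (n-r) * pu r)
                + ((r+2)*(r+1)) • (pbb r * e (n-r))) := by
        refine Finset.sum_congr rfl fun r hr => ?_
        have hrn := Finset.mem_range.mp hr
        rw [(IH r hrn).1, (IH r hrn).2.1, (IH r hrn).2.2.1, (IH r hrn).2.2.2]
        simp only [smul_mul_assoc, mul_smul_comm, ← natCast_zsmul]
        push_cast
        module
      rw [h4] at h3
      have h5 := add_left_cancel h3
      simp only [Nat.sub_self, he0, mul_one, Hp, Hpb, Hpu] at h5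
      simp only [smul_mul_assoc, mul_smul_comm, ← natCast_zsmul] at h5
      push_cast at h5
      have h6 : (((n:ℤ)+2)*((n:ℤ)+1)) • ω (pbb n)
          = (((n:ℤ)+2)*((n:ℤ)+1)) • (((-1:ℤ)^(n+1)) • pbb n) := by
        linear_combination (norm := module) h5
      exact zsmul_cancel (by positivity) h6
    exact ⟨Hp, Hpb, Hpu, Hpbb⟩
  have HP : ∀ k, ω (p k) = ((-1:ℤ)^(k+1)) • p k := fun k => (main k).1
  have HPb : ∀ k, ω (pb k) = ((-1:ℤ)^k) • pb k := fun k => (main k).2.1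
  have HPu : ∀ k, ω (pu k) = ((-1:ℤ)^k) • pu k := fun k => (main k).2.2.1
  have HPbb : ∀ k, ω (pbb k) = ((-1:ℤ)^(k+1)) • pbb k := fun k => (main k).2.2.2
  constructor
  · intro n
    exact ⟨by rw [intSign_sub_one]; exact HP n, by rw [intSign_nat]; exact HPb n,
      by rw [intSign_nat]; exact HPu n, by rw [intSign_sub_one]; exact HPbb n⟩
  · have Lp : ∀ l : List ℕ,
        ω ((l.map p).prod) = ((-1:ℤ)^(l.sum + l.length)) • (l.map p).prod := by
      intro l
      induction l with
      | nil => simp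
      | cons a l ih =>
        simp only [List.map_cons, List.prod_cons, List.sum_cons, List.length_cons,
          map_mul, ih, HP a]
        rw [smul_mul_assoc, mul_smul_comm, smul_smul]
        congr 1
        ring
    have Lpbb : ∀ l : List ℕ,
        ω ((l.map pbb).prod) = ((-1:ℤ)^(l.sum + l.length)) • (l.map pbb).prod := by
      intro l
      induction l with
      | nil => simp
      | cons a l ih =>
        simp only [List.map_cons, List.prod_cons, List.sum_cons, List.length_cons,
          map_mul, ih, HPbb a]
        rw [smul_mul_assoc, mul_smul_comm, smul_smul]
        congr 1
        ring
    have Lpb : ∀ l : List ℕ,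
        ω ((l.map pb).prod) = ((-1:ℤ)^l.sum) • (l.map pb).prod := by
      intro l
      induction l with
      | nil => simp
      | cons a l ih =>
        simp only [List.map_cons, List.prod_cons, List.sum_cons, map_mul, ih, HPb a]
        rw [smul_mul_assoc, mul_smul_comm, smul_smul]
        congr 1
        ring
    have Lpu : ∀ l : List ℕ,
        ω ((l.map pu).prod) = ((-1:ℤ)^l.sum) • (l.map pu).prod := by
      intro l
      induction l with
      | nil => simp
      | cons a l ih =>
        simp only [List.map_cons, List.prod_cons, List.sum_cons, map_mul, ih, HPu a]
        rw [smul_mul_assoc, mul_smul_comm, smul_smul]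
        congr 1
        ring
    intro lbb lb lu l0
    rw [map_mul, map_mul, map_mul, Lpbb, Lpb, Lpu, Lp, intSign_key]
    simp only [smul_mul_assoc, mul_smul_comm, smul_smul]
    congr 1
    ring
end
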